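/- Let Ω ⊂ ℝ^d be a bounded convex open set of diameter R, and let (u,w) be continuous on closure(Ω) with w = 0 on ∂Ω, satisfying the two-point condition (1/2)|u(y) − u(x)|² + ⟨w(y) − w(x), y − x⟩ ≤ |x − y|² for all x,y ∈ closure(Ω). Then u is (1/2)-Hölder continuous with |u(x) − u(y)| ≤ √(2R)·|x − y|^{1/2} for all x,y ∈ closure(Ω). -/

import Mathlib

/-!
Fix `x ≠ y` in the closure and follow the line through them beyond `y` and beyond `x`. Since `Ω`
is bounded, connectedness of the two rays gives boundary points `b = y + t (y - x)` and
`a = x + t' (x - y)` with `t, t' ≥ 0`, where `w` vanishes. The two-point condition tested on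
`(y, b)` and on `(x, a)` gives `⟪w y, y - x⟫ ≥ -t ‖y - x‖²` and `⟪w x, x - y⟫ ≥ -t' ‖y - x‖²`,
while `(1 + t + t') ‖y - x‖ = ‖b - a‖ ≤ R`. Hence `⟪w y - w x, y - x⟫ ≥ ‖y - x‖² - R ‖y - x‖`,
and the two-point condition for `(x, y)` leaves `(1/2) |u y - u x|² ≤ R ‖y - x‖`.
-/

open Bornology Metric Set
open scoped InnerProductSpace

theorem IsPreconnected.inter_frontier_nonempty {X : Type*} [TopologicalSpace X] {s t : Set X}
    (ht : IsPreconnected t) (hts : (t ∩ closure s).Nonempty) (hts' : (t \ s).Nonempty) :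
    (t ∩ frontier s).Nonempty := by
  rw [frontier_eq_closure_inter_closure]
  refine isPreconnected_closed_iff.1 ht _ _ isClosed_closure isClosed_closure ?_ hts
    (hts'.mono fun x hx ↦ ⟨hx.1, subset_closure hx.2⟩)
  exact fun x _ ↦ (em (x ∈ s)).imp (fun h ↦ subset_closure h) fun h ↦ subset_closure h

variable {E : Type*} [NormedAddCommGroup E] [NormedSpace ℝ E]

theorem Bornology.IsBounded.exists_add_smul_mem_frontier {s : Set E} (hs : IsBounded s)
    {p : E} (hp : p ∈ closure s) {v : E} (hv : v ≠ 0) :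
    ∃ t : ℝ, 0 ≤ t ∧ p + t • v ∈ frontier s := by
  have hray : IsPreconnected ((fun t : ℝ ↦ p + t • v) '' Ici (0 : ℝ)) :=
    isPreconnected_Ici.image _ (by fun_prop)
  obtain ⟨r, hr, hsr⟩ := hs.subset_closedBall_lt 0 p
  have hvpos : 0 < ‖v‖ := norm_pos_iff.2 hv
  have hfar : p + ((r + 1) / ‖v‖) • v ∉ s := fun hmem ↦ by
    have := hsr hmem
    rw [mem_closedBall, dist_eq_norm, add_sub_cancel_left, norm_smul,
      Real.norm_of_nonneg (by positivity), div_mul_cancel₀ _ hvpos.ne'] at this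
    linarith
  obtain ⟨_, ⟨τ, hτ, rfl⟩, hfr⟩ := hray.inter_frontier_nonempty ⟨p, ⟨0, self_mem_Ici, by simp⟩, hp⟩
    ⟨_, ⟨(r + 1) / ‖v‖, mem_Ici.2 (by positivity), rfl⟩, hfar⟩
  exact ⟨τ, hτ, hfr⟩

variable {F : Type*} [NormedAddCommGroup F] [InnerProductSpace ℝ F]

theorem neg_mul_norm_sq_le_inner_of_inner_le {w : F → F} {x y : F} {t : ℝ} (ht : 0 ≤ t)
    (hw : w (y + t • (y - x)) = 0)
    (h : ⟪w (y + t • (y - x)) - w y, y + t • (y - x) - y⟫_ℝ ≤ ‖y + t • (y - x) - y‖ ^ 2) :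
    -t * ‖y - x‖ ^ 2 ≤ ⟪w y, y - x⟫_ℝ := by
  rcases ht.eq_or_lt with rfl | ht
  · simp_all
  rw [hw, zero_sub, add_sub_cancel_left, inner_neg_left, real_inner_smul_right, norm_smul,
    Real.norm_of_nonneg ht.le, mul_pow] at h
  nlinarith

theorem Bornology.IsBounded.sq_sub_diam_mul_le_inner {s : Set F} (hs : IsBounded s) {w : F → F}
    (hw0 : ∀ z ∈ frontier s, w z = 0)
    (hw : ∀ x ∈ closure s, ∀ y ∈ closure s, ⟪w y - w x, y - x⟫_ℝ ≤ ‖y - x‖ ^ 2)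
    {x y : F} (hx : x ∈ closure s) (hy : y ∈ closure s) :
    ‖y - x‖ ^ 2 - diam s * ‖y - x‖ ≤ ⟪w y - w x, y - x⟫_ℝ := by
  rcases eq_or_ne y x with rfl | hyx
  · simp
  obtain ⟨t, ht, hb⟩ := hs.exists_add_smul_mem_frontier hy (sub_ne_zero.2 hyx)
  obtain ⟨t', ht', ha⟩ := hs.exists_add_smul_mem_frontier hx (sub_ne_zero.2 hyx.symm)
  have hwy := neg_mul_norm_sq_le_inner_of_inner_le ht (hw0 _ hb)
    (hw _ hy _ (frontier_subset_closure hb))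
  have hwx := neg_mul_norm_sq_le_inner_of_inner_le ht' (hw0 _ ha)
    (hw _ hx _ (frontier_subset_closure ha))
  rw [← neg_sub y x, inner_neg_right, norm_neg] at hwx
  have hdiam : (1 + t + t') * ‖y - x‖ ≤ diam s := by
    have := dist_le_diam_of_mem hs.closure (frontier_subset_closure hb)
      (frontier_subset_closure ha)
    rwa [diam_closure, dist_eq_norm,
      show y + t • (y - x) - (x + t' • (x - y)) = (1 + t + t') • (y - x) by module, norm_smul,
      Real.norm_of_nonneg (by positivity)] at this
  rw [inner_sub_left]
  nlinarith [mul_le_mul_of_nonneg_right hdiam (norm_nonneg (y - x))]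

theorem stmt8 {d : ℕ} (Ω : Set (EuclideanSpace ℝ (Fin d)))
    (hΩb : Bornology.IsBounded Ω)
    (u : EuclideanSpace ℝ (Fin d) → ℝ) (w : EuclideanSpace ℝ (Fin d) → EuclideanSpace ℝ (Fin d))
    (hw0 : ∀ x ∈ frontier Ω, w x = 0)
    (h2p : ∀ x ∈ closure Ω, ∀ y ∈ closure Ω,
      (1/2) * (u y - u x)^2 + (inner ℝ (w y - w x) (y - x) : ℝ) ≤ ‖y - x‖^2) :
    ∀ x ∈ closure Ω, ∀ y ∈ closure Ω,
      |u x - u y| ≤ Real.sqrt (2 * Metric.diam Ω) * Real.sqrt ‖x - y‖ := by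
  intro x hx y hy
  have hw : ∀ x ∈ closure Ω, ∀ y ∈ closure Ω, ⟪w y - w x, y - x⟫_ℝ ≤ ‖y - x‖ ^ 2 :=
    fun x hx y hy ↦ (le_add_of_nonneg_left (by positivity)).trans (h2p x hx y hy)
  have hsq : (u x - u y) ^ 2 ≤ 2 * diam Ω * ‖x - y‖ := by
    rw [norm_sub_rev]
    nlinarith [h2p x hx y hy, hΩb.sq_sub_diam_mul_le_inner hw0 hw hx hy]
  calc |u x - u y| = √((u x - u y) ^ 2) := (Real.sqrt_sq_eq_abs _).symm
    _ ≤ √(2 * diam Ω * ‖x - y‖) := Real.sqrt_le_sqrt hsq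
    _ = √(2 * diam Ω) * √‖x - y‖ := Real.sqrt_mul (by positivity) _
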